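/- Let p be an odd prime and K(p^r) = ℤ/p^rℤ ⋊ (ℤ/p^rℤ)^×. For an element z^i σ with α = v_p(σ−1) and β = v_p(i), its conjugacy class is {z^j σ : v_p(j) = β} if β < α, and {z^j σ : v_p(j) ≥ α} if α ≤ β. -/
import Mathlib


/-- The action of `(ℤ/mℤ)ˣ` on `ℤ/mℤ` by multiplication. -/
def holMap (m : ℕ) : (ZMod m)ˣ →* MulAut (Multiplicative (ZMod m)) where
  toFun u := AddEquiv.toMultiplicative (DistribMulAction.toAddAut (ZMod m)ˣ (ZMod m) u)
  map_one' := by ext x; simp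
  map_mul' u v := by ext x; simp [mul_smul]

/-- The holomorph `K(m) = C(m) ⋊ G(m)` of the cyclic group of order `m`. -/
abbrev Kgrp (m : ℕ) := Multiplicative (ZMod m) ⋊[holMap m] (ZMod m)ˣ

/-- The `p`-adic valuation on `ℤ/p^rℤ`, with the convention `v_p 0 = r`. -/
def vz (p r : ℕ) (i : ZMod (p ^ r)) : ℕ :=
  if i = 0 then r else (i.val).factorization p


section
variable {p r : ℕ} (hp : p.Prime) (hr : 1 ≤ r)
include hp hr

lemma neZero_pr : NeZero (p ^ r) := ⟨pow_ne_zero r hp.pos.ne'⟩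

omit hp hr in
lemma ppow_r_eq_zero : (p : ZMod (p ^ r)) ^ r = 0 := by
  rw [← Nat.cast_pow, ZMod.natCast_self]

lemma vz_lt_of_ne {i : ZMod (p ^ r)} (hi : i ≠ 0) : vz p r i < r := by
  haveI := neZero_pr hp hr
  have hv : i.val ≠ 0 := fun h => hi ((ZMod.val_eq_zero i).mp h)
  rw [vz, if_neg hi]
  by_contra hle
  push_neg at hle
  have : p ^ r ∣ i.val := (hp.pow_dvd_iff_le_factorization hv).mpr hle
  exact absurd (Nat.le_of_dvd (Nat.pos_of_ne_zero hv) this) (not_le.mpr (ZMod.val_lt i))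

lemma vz_le (i : ZMod (p ^ r)) : vz p r i ≤ r := by
  by_cases hi : i = 0
  · rw [vz, if_pos hi]
  · exact (vz_lt_of_ne hp hr hi).le

lemma vz_eq_r_iff {i : ZMod (p ^ r)} : vz p r i = r ↔ i = 0 := by
  constructor
  · intro h
    by_contra hi
    exact absurd h (vz_lt_of_ne hp hr hi).ne
  · intro h; rw [vz, if_pos h]

lemma dvd_val_iff_dvd {α : ℕ} (hα : α ≤ r) (i : ZMod (p ^ r)) :
    (p : ZMod (p ^ r)) ^ α ∣ i ↔ p ^ α ∣ i.val := by
  haveI := neZero_pr hp hr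
  constructor
  · rintro ⟨c, hc⟩
    have h1 : i.val = (p ^ α * c.val) % p ^ r := by
      have : ((p ^ α * c.val : ℕ) : ZMod (p ^ r)) = i := by
        push_cast
        rw [ZMod.natCast_val, ZMod.cast_id, ← hc]
      rw [← this, ZMod.val_natCast]
    rw [h1]
    exact (Nat.dvd_mod_iff (pow_dvd_pow p hα)).mpr ⟨c.val, rfl⟩
  · rintro ⟨c, hc⟩
    refine ⟨(c : ZMod (p ^ r)), ?_⟩
    have := congrArg (fun n : ℕ => (n : ZMod (p ^ r))) hc
    simpa [ZMod.natCast_val, ZMod.cast_id] using this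

lemma dvd_iff_le_vz {α : ℕ} (hα : α ≤ r) (i : ZMod (p ^ r)) :
    (p : ZMod (p ^ r)) ^ α ∣ i ↔ α ≤ vz p r i := by
  by_cases hi : i = 0
  · simp [hi, vz, hα]
  · haveI := neZero_pr hp hr
    have hv : i.val ≠ 0 := fun h => hi ((ZMod.val_eq_zero i).mp h)
    rw [dvd_val_iff_dvd hp hr hα, vz, if_neg hi, hp.pow_dvd_iff_le_factorization hv]

lemma ppow_vz_dvd (i : ZMod (p ^ r)) : (p : ZMod (p ^ r)) ^ (vz p r i) ∣ i :=
  (dvd_iff_le_vz hp hr (vz_le hp hr i) i).mpr le_rfl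

lemma exists_unit_mul (i : ZMod (p ^ r)) :
    ∃ c : (ZMod (p ^ r))ˣ, i = (p : ZMod (p ^ r)) ^ (vz p r i) * c := by
  haveI := neZero_pr hp hr
  by_cases hi : i = 0
  · exact ⟨1, by simp [hi, vz, ppow_r_eq_zero]⟩
  · have hv : i.val ≠ 0 := fun h => hi ((ZMod.val_eq_zero i).mp h)
    set β := vz p r i with hβ
    have hdvd : p ^ β ∣ i.val := by
      rw [hβ, vz, if_neg hi]
      exact Nat.ordProj_dvd _ _
    obtain ⟨c, hc⟩ := hdvd
    have hpc : ¬ p ∣ c := by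
      intro hpci
      have : p ^ (β + 1) ∣ i.val := by
        obtain ⟨d, hd⟩ := hpci
        exact ⟨d, by rw [hc, hd]; ring⟩
      rw [hp.pow_dvd_iff_le_factorization hv, hβ, vz, if_neg hi] at this
      omega
    have hcu : IsUnit ((c : ℕ) : ZMod (p ^ r)) := by
      rw [ZMod.isUnit_iff_coprime]
      exact Nat.Coprime.pow_right r ((Nat.Prime.coprime_iff_not_dvd hp).mpr hpc).symm
    refine ⟨hcu.unit, ?_⟩
    have := congrArg (fun n : ℕ => (n : ZMod (p ^ r))) hc
    simp only [ZMod.natCast_val, ZMod.cast_id, Nat.cast_mul, Nat.cast_pow] at this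
    rw [this, IsUnit.unit_spec]

lemma vz_unit_mul (τ : (ZMod (p ^ r))ˣ) (i : ZMod (p ^ r)) :
    vz p r ((τ : ZMod (p ^ r)) * i) = vz p r i := by
  have key : ∀ (u : (ZMod (p ^ r))ˣ) (x : ZMod (p ^ r)),
      vz p r x ≤ vz p r ((u : ZMod (p ^ r)) * x) := by
    intro u x
    rw [← dvd_iff_le_vz hp hr (vz_le hp hr x)]
    exact Dvd.dvd.mul_left (ppow_vz_dvd hp hr x) _
  refine le_antisymm ?_ (key τ i)
  have := key τ⁻¹ ((τ : ZMod (p ^ r)) * i)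
  rwa [← mul_assoc, Units.inv_mul, one_mul] at this

lemma vz_neg (i : ZMod (p ^ r)) : vz p r (-i) = vz p r i := by
  have := vz_unit_mul hp hr (-1) i
  simpa using this

lemma vz_add_of_lt {a b : ZMod (p ^ r)} (h : vz p r a < vz p r b) :
    vz p r (a + b) = vz p r a := by
  have hab : vz p r a < r := lt_of_lt_of_le h (vz_le hp hr b)
  refine le_antisymm ?_ ?_
  · by_contra hle
    push_neg at hle
    have h1 : (p : ZMod (p ^ r)) ^ (vz p r a + 1) ∣ a + b :=
      (dvd_iff_le_vz hp hr (by omega) _).mpr hle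
    have h2 : (p : ZMod (p ^ r)) ^ (vz p r a + 1) ∣ b :=
      (dvd_iff_le_vz hp hr (by omega) _).mpr (by omega)
    have h3 : (p : ZMod (p ^ r)) ^ (vz p r a + 1) ∣ a := by
      have := dvd_sub h1 h2
      simpa using this
    rw [dvd_iff_le_vz hp hr (by omega)] at h3
    omega
  · rw [← dvd_iff_le_vz hp hr hab.le]
    exact dvd_add (ppow_vz_dvd hp hr a)
      ((dvd_iff_le_vz hp hr hab.le _).mpr (by omega))

lemma key_lemma (i : ZMod (p ^ r)) (σ : (ZMod (p ^ r))ˣ) (j : ZMod (p ^ r)) :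
    (∃ (τ : (ZMod (p ^ r))ˣ) (k : ZMod (p ^ r)),
        j = (τ : ZMod (p ^ r)) * i + (1 - (σ : ZMod (p ^ r))) * k) ↔
      (if vz p r i < vz p r ((σ : ZMod (p ^ r)) - 1)
        then vz p r j = vz p r i
        else vz p r ((σ : ZMod (p ^ r)) - 1) ≤ vz p r j) := by
  set α := vz p r ((σ : ZMod (p ^ r)) - 1) with hα
  set β := vz p r i with hβ
  have hα1 : vz p r (1 - (σ : ZMod (p ^ r))) = α := by
    rw [hα, ← vz_neg hp hr]
    congr 1; ring
  have hαr : α ≤ r := hα ▸ vz_le hp hr _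
  have hβr : β ≤ r := hβ ▸ vz_le hp hr _
  have hdvd1σ : ∀ k : ZMod (p ^ r), (p : ZMod (p ^ r)) ^ α ∣ (1 - (σ : ZMod (p ^ r))) * k := by
    intro k
    exact Dvd.dvd.mul_right (hα1 ▸ ppow_vz_dvd hp hr (1 - (σ : ZMod (p ^ r)))) k
  split_ifs with hlt
  · constructor
    · rintro ⟨τ, k, rfl⟩
      have h1 : vz p r ((τ : ZMod (p ^ r)) * i) = β := vz_unit_mul hp hr τ i
      have h2 : α ≤ vz p r ((1 - (σ : ZMod (p ^ r))) * k) :=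
        (dvd_iff_le_vz hp hr hαr _).mp (hdvd1σ k)
      rw [vz_add_of_lt hp hr (by omega), h1]
    · intro hj
      have hβlt : β < r := by omega
      have hi0 : i ≠ 0 := fun h => by simp [vz, h] at hβ; omega
      have hj0 : j ≠ 0 := fun h => by
        rw [h] at hj; simp [vz] at hj; omega
      obtain ⟨u, hu⟩ := exists_unit_mul hp hr i
      obtain ⟨d, hd⟩ := exists_unit_mul hp hr j
      refine ⟨d * u⁻¹, 0, ?_⟩
      rw [hd, hj, mul_zero, add_zero, hu, ← hβ]
      rw [Units.val_mul]
      ring_nf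
      rw [mul_assoc, Units.inv_mul, mul_one]
  · push_neg at hlt
    constructor
    · rintro ⟨τ, k, rfl⟩
      rw [← dvd_iff_le_vz hp hr hαr]
      refine dvd_add ?_ (hdvd1σ k)
      have : α ≤ vz p r ((τ : ZMod (p ^ r)) * i) := by rw [vz_unit_mul hp hr]; omega
      exact (dvd_iff_le_vz hp hr hαr _).mpr this
    · intro hj
      obtain ⟨c, hc⟩ := exists_unit_mul hp hr (1 - (σ : ZMod (p ^ r)))
      rw [hα1] at hc
      have hji : (p : ZMod (p ^ r)) ^ α ∣ j - i := by
        refine dvd_sub ((dvd_iff_le_vz hp hr hαr _).mpr hj)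
          ((dvd_iff_le_vz hp hr hαr _).mpr (by omega))
      obtain ⟨m, hm⟩ := hji
      refine ⟨1, (c⁻¹ : (ZMod (p ^ r))ˣ) * m, ?_⟩
      rw [hc]
      have : (p : ZMod (p ^ r)) ^ α * ↑c * (↑c⁻¹ * m) = (p : ZMod (p ^ r)) ^ α * m := by
        rw [mul_assoc, ← mul_assoc (c : ZMod (p ^ r)), Units.mul_inv, one_mul]
      rw [this, ← hm]
      simp
  end

lemma holMap_apply (m : ℕ) (u : (ZMod m)ˣ) (x : Multiplicative (ZMod m)) :
    holMap m u x = Multiplicative.ofAdd ((u : ZMod m) * x.toAdd) := rfl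

lemma holMap_inv_apply (m : ℕ) (u : (ZMod m)ˣ) (x : Multiplicative (ZMod m)) :
    (holMap m u)⁻¹ x = Multiplicative.ofAdd ((↑u⁻¹ : ZMod m) * x.toAdd) := by
  rw [← map_inv]; rfl

lemma conj_eq (m : ℕ) (k i : ZMod m) (τ σ : (ZMod m)ˣ) :
    (⟨.ofAdd k, τ⟩ * ⟨.ofAdd i, σ⟩ * (⟨.ofAdd k, τ⟩ : Kgrp m)⁻¹ : Kgrp m)
      = ⟨.ofAdd (↑τ * i + (1 - ↑σ) * k), σ⟩ := by
  have h2 : (↑(τ * σ) : ZMod m) * ↑τ⁻¹ * k = ↑σ * k := by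
    rw [Units.val_mul, mul_comm (↑τ : ZMod m) ↑σ, mul_assoc (↑σ : ZMod m), Units.mul_inv, mul_one]
  refine SemidirectProduct.ext ?_ ?_
  · simp only [SemidirectProduct.mul_left, SemidirectProduct.mul_right,
      SemidirectProduct.inv_left, SemidirectProduct.inv_right, holMap_apply, holMap_inv_apply,
      toAdd_ofAdd, toAdd_inv, ← ofAdd_add, ← ofAdd_neg, mul_neg]
    congr 1
    rw [← mul_assoc, h2]
    ring
  · simp only [SemidirectProduct.mul_right, SemidirectProduct.inv_right]
    rw [mul_comm τ σ, mul_assoc, mul_inv_cancel, mul_one]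

theorem stmt_8 (p r : ℕ) (hp : p.Prime) (hodd : Odd p) (hr : 1 ≤ r)
    (i : ZMod (p ^ r)) (σ : (ZMod (p ^ r))ˣ) (h : Kgrp (p ^ r)) :
    IsConj (⟨Multiplicative.ofAdd i, σ⟩ : Kgrp (p ^ r)) h ↔
      ∃ j : ZMod (p ^ r), h = ⟨Multiplicative.ofAdd j, σ⟩ ∧
        (if vz p r i < vz p r ((σ : ZMod (p ^ r)) - 1)
          then vz p r j = vz p r i
          else vz p r ((σ : ZMod (p ^ r)) - 1) ≤ vz p r j) := by
  have hconj : ∀ (h' : Kgrp (p ^ r)),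
      IsConj (⟨Multiplicative.ofAdd i, σ⟩ : Kgrp (p ^ r)) h' ↔
      ∃ j : ZMod (p ^ r), h' = ⟨Multiplicative.ofAdd j, σ⟩ ∧
        ∃ (τ : (ZMod (p ^ r))ˣ) (k : ZMod (p ^ r)),
          j = (τ : ZMod (p ^ r)) * i + (1 - (σ : ZMod (p ^ r))) * k := by
    intro h'
    constructor
    · intro H
      obtain ⟨c, hc⟩ := isConj_iff.mp H
      obtain ⟨l, τ⟩ := c
      have hl : (⟨l, τ⟩ : Kgrp (p ^ r)) = ⟨.ofAdd l.toAdd, τ⟩ := by simp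
      rw [hl, conj_eq] at hc
      exact ⟨(τ : ZMod (p ^ r)) * i + (1 - (σ : ZMod (p ^ r))) * l.toAdd, hc.symm,
        τ, l.toAdd, rfl⟩
    · rintro ⟨j, rfl, τ, k, rfl⟩
      exact isConj_iff.mpr ⟨⟨.ofAdd k, τ⟩, conj_eq _ k i τ σ⟩
  rw [hconj h]
  constructor
  · rintro ⟨j, rfl, hex⟩
    exact ⟨j, rfl, (key_lemma hp hr i σ j).mp hex⟩
  · rintro ⟨j, rfl, hif⟩
    exact ⟨j, rfl, (key_lemma hp hr i σ j).mpr hif⟩
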